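/- arXiv:1212.3064 — 2 statements merged into one kernel-verified Lean document; each statement's English description precedes it below -/
import Mathlib

section
/- Suppose φ is Sturmian. Then for every n ∈ ℕ there exists a vertex x such that the colored n-ball [B_n(x)] is special, and the special colored n-ball is unique: if [B_n(x)] and [B_n(y)] are both special, then [B_n(x)] = [B_n(y)]. -/
open SimpleGraph

/-- Equivalence of colored `n`-balls around `x` and `y`: a graph isomorphism between the
induced subgraphs on the balls, sending center to center and preserving the coloring. -/
def BallEquiv {V A : Type*} (T : SimpleGraph V) (φ : V → A) (n : ℕ) (x y : V) : Prop :=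
  ∃ f : {v : V // T.dist x v ≤ n} ≃ {v : V // T.dist y v ≤ n},
    ((f ⟨x, by simp [SimpleGraph.dist_self]⟩ : {v : V // T.dist y v ≤ n}) : V) = y ∧
    (∀ u w : {v : V // T.dist x v ≤ n}, T.Adj (u : V) (w : V) ↔ T.Adj (f u : V) (f w : V)) ∧
    ∀ v : {v : V // T.dist x v ≤ n}, φ (f v : V) = φ (v : V)

/-- Two vertices are in the same class if a color-preserving automorphism of `T`
sends one to the other. -/
def SameClass {V A : Type*} (T : SimpleGraph V) (φ : V → A) (x y : V) : Prop :=
  ∃ g : V ≃ V, (∀ u w : V, T.Adj (g u) (g w) ↔ T.Adj u w) ∧ g x = y ∧ ∀ v, φ (g v) = φ v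

/-- Subword complexity: the number of equivalence classes of colored `n`-balls. -/
noncomputable def ballComplexity {V A : Type*} (T : SimpleGraph V) (φ : V → A) (n : ℕ) : ℕ :=
  Nat.card (Quot (BallEquiv T φ n))

/-- A coloring is periodic if it is invariant under a subgroup of the automorphism group
of `T` having finitely many orbits on vertices. -/
def IsPeriodicColoring {V A : Type*} (T : SimpleGraph V) (φ : V → A) : Prop :=
  ∃ Γ : Subgroup (Equiv.Perm V),
    (∀ γ ∈ Γ, ∀ u w : V, T.Adj (γ u) (γ w) ↔ T.Adj u w) ∧
    (∀ γ ∈ Γ, ∀ v, φ (γ v) = φ v) ∧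
    Finite (Quot (fun x y : V => ∃ γ ∈ Γ, γ x = y))

/-- The colored `n`-ball around `x` is special. -/
def IsSpecial {V A : Type*} (T : SimpleGraph V) (φ : V → A) (n : ℕ) (x : V) : Prop :=
  ∃ y z : V, BallEquiv T φ n x y ∧ BallEquiv T φ n x z ∧ ¬ BallEquiv T φ (n + 1) y z

/-- The type set of a vertex. -/
def TypeSet {V A : Type*} (T : SimpleGraph V) (φ : V → A) (x : V) : Set ℕ :=
  {n : ℕ | IsSpecial T φ n x}

/-- The maximal type of a vertex of bounded type (`-1` if the type set is empty). -/
noncomputable def maxType {V A : Type*} (T : SimpleGraph V) (φ : V → A) (x : V) : ℤ :=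
  sSup (insert (-1) ((fun n : ℕ => (n : ℤ)) '' TypeSet T φ x))

/-- The coloring is Sturmian if its subword complexity is `n + 2`. -/
def IsSturmian {V A : Type*} (T : SimpleGraph V) (φ : V → A) : Prop :=
  ∀ n : ℕ, ballComplexity T φ n = n + 2

/-- Eventually periodic coloring. -/
def IsEventuallyPeriodic {V A : Type*} (T : SimpleGraph V) (φ : V → A) : Prop :=
  ∃ K : Set V, K.Nonempty ∧ K.Finite ∧ (T.induce K).Connected ∧
    ∀ v : (Kᶜ : Set V), ∃ ψ : V → A, IsPeriodicColoring T ψ ∧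
      ∀ w : (Kᶜ : Set V), (T.induce (Kᶜ : Set V)).Reachable v w → ψ (w : V) = φ (w : V)

/-- The vertex set of the `n`-branch from `x` towards its neighbor `x'`. -/
def branchSet {V : Type*} (T : SimpleGraph V) (n : ℕ) (x x' : V) : Set V :=
  insert x {y : V | T.dist x y ≤ n ∧ T.dist y x' < T.dist y x}

/-- Equivalence of colored `n`-branches. -/
def BranchEquiv {V A : Type*} (T : SimpleGraph V) (φ : V → A) (n : ℕ)
    (x x' y y' : V) : Prop :=
  ∃ f : (branchSet T n x x') ≃ (branchSet T n y y'),
    ((f ⟨x, Set.mem_insert x _⟩ : (branchSet T n y y')) : V) = y ∧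
    (∀ u w : (branchSet T n x x'), T.Adj (u : V) (w : V) ↔ T.Adj (f u : V) (f w : V)) ∧
    ∀ v : (branchSet T n x x'), φ (f v : V) = φ (v : V)

/-- A coloring of `K` appears exactly once if the only connected subgraph of `T`
color-isomorphic to it is `K` itself. -/
def AppearsOnce {V A : Type*} (T : SimpleGraph V) (φ : V → A) (K : Set V) : Prop :=
  ∀ K' : Set V, (T.induce K').Connected →
    (∃ f : K ≃ K', (∀ u w : K, T.Adj (u : V) (w : V) ↔ T.Adj (f u : V) (f w : V)) ∧
      ∀ v : K, φ (f v : V) = φ (v : V)) → K' = K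

section AuxLemmas

variable {V A : Type*} {T : SimpleGraph V} {φ : V → A} {n : ℕ}

lemma ballEquiv_refl (x : V) : BallEquiv T φ n x x :=
  ⟨Equiv.refl _, rfl, fun _ _ => Iff.rfl, fun _ => rfl⟩

lemma ballEquiv_symm {x y : V} (h : BallEquiv T φ n x y) : BallEquiv T φ n y x := by
  obtain ⟨f, hc, ha, hφ⟩ := h
  refine ⟨f.symm, ?_, ?_, ?_⟩
  · have h1 : f ⟨x, by simp [SimpleGraph.dist_self]⟩ = ⟨y, by simp [SimpleGraph.dist_self]⟩ :=
      Subtype.ext hc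
    have h2 : f.symm ⟨y, by simp [SimpleGraph.dist_self]⟩ = ⟨x, by simp [SimpleGraph.dist_self]⟩ :=
      (Equiv.symm_apply_eq f).mpr h1.symm
    exact congrArg Subtype.val h2
  · intro u w
    simpa using (ha (f.symm u) (f.symm w)).symm
  · intro v
    simpa using (hφ (f.symm v)).symm

lemma ballEquiv_trans {x y z : V} (h1 : BallEquiv T φ n x y) (h2 : BallEquiv T φ n y z) :
    BallEquiv T φ n x z := by
  obtain ⟨f, hfc, hfa, hfφ⟩ := h1
  obtain ⟨g, hgc, hga, hgφ⟩ := h2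
  refine ⟨f.trans g, ?_, ?_, ?_⟩
  · have h1' : f ⟨x, by simp [SimpleGraph.dist_self]⟩ = ⟨y, by simp [SimpleGraph.dist_self]⟩ :=
      Subtype.ext hfc
    have : (f.trans g) ⟨x, by simp [SimpleGraph.dist_self]⟩
        = g ⟨y, by simp [SimpleGraph.dist_self]⟩ := by
      rw [Equiv.trans_apply, h1']
    rw [this]
    exact hgc
  · intro u w
    exact (hfa u w).trans (hga (f u) (f w))
  · intro v
    rw [Equiv.trans_apply, hgφ, hfφ]

lemma ballEquiv_equivalence : Equivalence (BallEquiv T φ n) :=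
  ⟨ballEquiv_refl, ballEquiv_symm, ballEquiv_trans⟩

lemma ball_dist_le (hc : T.Connected) {x y : V}
    (f : {v : V // T.dist x v ≤ n + 1} ≃ {v : V // T.dist y v ≤ n + 1})
    (hfc : ((f ⟨x, by simp [SimpleGraph.dist_self]⟩ : {v : V // T.dist y v ≤ n + 1}) : V) = y)
    (hfa : ∀ u w : {v : V // T.dist x v ≤ n + 1},
      T.Adj (u : V) (w : V) ↔ T.Adj (f u : V) (f w : V)) :
    ∀ (d : ℕ) (u : V) (h : T.dist x u ≤ n + 1), T.dist x u ≤ d →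
      T.dist y ((f ⟨u, h⟩ : {v : V // T.dist y v ≤ n + 1}) : V) ≤ d := by
  intro d
  induction d with
  | zero =>
    intro u h hd
    have hxu : x = u := hc.dist_eq_zero_iff.mp (Nat.le_zero.mp hd)
    subst hxu
    have h0 : (⟨x, h⟩ : {v : V // T.dist x v ≤ n + 1})
        = ⟨x, by simp [SimpleGraph.dist_self]⟩ := rfl
    rw [h0, hfc]
    simp [SimpleGraph.dist_self]
  | succ d ih =>
    intro u h hd
    by_cases hle : T.dist x u ≤ d
    · exact le_trans (ih u h hle) (Nat.le_succ d)
    · by_cases hdn : n + 1 ≤ d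
      · exact le_trans (f ⟨u, h⟩).2 (by omega)
      · have hdd : T.dist x u = d + 1 := le_antisymm hd (Nat.not_le.mp hle)
        obtain ⟨W, hW⟩ := (hc.preconnected u x).exists_walk_length_eq_dist
        have hWlen : W.length = d + 1 := by
          rw [hW, SimpleGraph.dist_comm]
          exact hdd
        have hnn : ¬ W.Nil := by
          rw [SimpleGraph.Walk.nil_iff_length_eq, hWlen]
          omega
        obtain ⟨b, hadj, q, hWeq⟩ := SimpleGraph.Walk.not_nil_iff.mp hnn
        have hq : q.length = d := by
          have := congrArg SimpleGraph.Walk.length hWeq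
          simp only [SimpleGraph.Walk.length_cons, hWlen] at this
          omega
        have hbd : T.dist x b ≤ d := by
          rw [SimpleGraph.dist_comm]
          exact hq ▸ SimpleGraph.dist_le q
        have hb : T.dist x b ≤ n + 1 := le_trans hbd (by omega)
        have hadj2 : T.Adj ((f ⟨u, h⟩ : {v : V // T.dist y v ≤ n + 1}) : V)
            ((f ⟨b, hb⟩ : {v : V // T.dist y v ≤ n + 1}) : V) :=
          (hfa ⟨u, h⟩ ⟨b, hb⟩).mp hadj
        have htri := hc.dist_triangle (u := y)
          (v := ((f ⟨b, hb⟩ : {v : V // T.dist y v ≤ n + 1}) : V))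
          (w := ((f ⟨u, h⟩ : {v : V // T.dist y v ≤ n + 1}) : V))
        have hone : T.dist ((f ⟨b, hb⟩ : {v : V // T.dist y v ≤ n + 1}) : V)
            ((f ⟨u, h⟩ : {v : V // T.dist y v ≤ n + 1}) : V) ≤ 1 := by
          simpa using SimpleGraph.dist_le hadj2.symm.toWalk
        have hih := ih b hb hbd
        omega

lemma ballEquiv_of_succ (hc : T.Connected) {x y : V} (h : BallEquiv T φ (n + 1) x y) :
    BallEquiv T φ n x y := by
  obtain ⟨f, hfc, hfa, hfφ⟩ := h
  have hfc' : ((f.symm ⟨y, by simp [SimpleGraph.dist_self]⟩ :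
      {v : V // T.dist x v ≤ n + 1}) : V) = x := by
    have h1 : f ⟨x, by simp [SimpleGraph.dist_self]⟩ = ⟨y, by simp [SimpleGraph.dist_self]⟩ :=
      Subtype.ext hfc
    have h2 : f.symm ⟨y, by simp [SimpleGraph.dist_self]⟩
        = ⟨x, by simp [SimpleGraph.dist_self]⟩ := (Equiv.symm_apply_eq f).mpr h1.symm
    exact congrArg Subtype.val h2
  have hfa' : ∀ u w : {v : V // T.dist y v ≤ n + 1},
      T.Adj (u : V) (w : V) ↔ T.Adj (f.symm u : V) (f.symm w : V) := by
    intro u w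
    simpa using (hfa (f.symm u) (f.symm w)).symm
  have key : ∀ (v : V) (hv1 : T.dist x v ≤ n + 1), T.dist x v ≤ n →
      T.dist y ((f ⟨v, hv1⟩ : {v : V // T.dist y v ≤ n + 1}) : V) ≤ n := by
    intro v hv1 hv
    obtain ⟨W, hW⟩ := (hc.preconnected v x).exists_walk_length_eq_dist
    have hWl : W.length ≤ n := by
      rw [hW, SimpleGraph.dist_comm]
      exact hv
    exact ball_dist_le hc f hfc hfa n v hv1 hv
  have key' : ∀ (v : V) (hv1 : T.dist y v ≤ n + 1), T.dist y v ≤ n →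
      T.dist x ((f.symm ⟨v, hv1⟩ : {v : V // T.dist x v ≤ n + 1}) : V) ≤ n := by
    intro v hv1 hv
    obtain ⟨W, hW⟩ := (hc.preconnected v y).exists_walk_length_eq_dist
    have hWl : W.length ≤ n := by
      rw [hW, SimpleGraph.dist_comm]
      exact hv
    exact ball_dist_le hc f.symm hfc' hfa' n v hv1 hv
  refine ⟨⟨fun v => ⟨(f ⟨v.1, le_trans v.2 (Nat.le_succ n)⟩ :
        {v : V // T.dist y v ≤ n + 1}), key v.1 _ v.2⟩,
      fun v => ⟨(f.symm ⟨v.1, le_trans v.2 (Nat.le_succ n)⟩ :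
        {v : V // T.dist x v ≤ n + 1}), key' v.1 _ v.2⟩, ?_, ?_⟩, ?_, ?_, ?_⟩
  · intro v
    apply Subtype.ext
    simp
  · intro v
    apply Subtype.ext
    simp
  · exact hfc
  · intro u w
    exact hfa ⟨u.1, le_trans u.2 (Nat.le_succ n)⟩ ⟨w.1, le_trans w.2 (Nat.le_succ n)⟩
  · intro v
    exact hfφ ⟨v.1, le_trans v.2 (Nat.le_succ n)⟩

lemma quot_mk_ballEquiv_eq {x y : V} :
    Quot.mk (BallEquiv T φ n) x = Quot.mk (BallEquiv T φ n) y ↔ BallEquiv T φ n x y := by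
  rw [Quot.eq]
  exact ballEquiv_equivalence.eqvGen_iff

end AuxLemmas

theorem stmt_10 {V A : Type*} (T : SimpleGraph V) (φ : V → A) (k : ℕ)
    (hk : 2 ≤ k) (htree : T.IsTree) (hreg : ∀ v : V, (T.neighborSet v).ncard = k)
    (hst : IsSturmian T φ) (n : ℕ) :
    (∃ x : V, IsSpecial T φ n x) ∧
    (∀ x y : V, IsSpecial T φ n x → IsSpecial T φ n y → BallEquiv T φ n x y) := by
  have hc := htree.isConnected
  have hcard_n : Nat.card (Quot (BallEquiv T φ n)) = n + 2 := hst n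
  have hcard_m : Nat.card (Quot (BallEquiv T φ (n + 1))) = n + 3 := hst (n + 1)
  haveI hfin_n : Finite (Quot (BallEquiv T φ n)) :=
    Nat.finite_of_card_ne_zero (by rw [hcard_n]; omega)
  haveI hfin_m : Finite (Quot (BallEquiv T φ (n + 1))) :=
    Nat.finite_of_card_ne_zero (by rw [hcard_m]; omega)
  let π : Quot (BallEquiv T φ (n + 1)) → Quot (BallEquiv T φ n) :=
    Quot.map id (fun _ _ h => ballEquiv_of_succ hc h)
  have hπ : ∀ v : V, π (Quot.mk _ v) = Quot.mk _ v := fun _ => rfl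
  have hπsurj : Function.Surjective π := by
    intro q
    induction q using Quot.ind with
    | _ v => exact ⟨Quot.mk _ v, rfl⟩
  constructor
  · by_contra hno
    push_neg at hno
    have hinj : Function.Injective π := by
      intro b1 b2
      induction b1 using Quot.ind with
      | _ v =>
        induction b2 using Quot.ind with
        | _ w =>
          intro hvw
          rw [hπ, hπ] at hvw
          have hn : BallEquiv T φ n v w := quot_mk_ballEquiv_eq.mp hvw
          by_contra hne
          have hnm : ¬ BallEquiv T φ (n + 1) v w := fun hh => hne (Quot.sound hh)
          exact hno v ⟨v, w, ballEquiv_refl v, hn, hnm⟩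
    have hle := Nat.card_le_card_of_injective π hinj
    omega
  · intro x y hx hy
    by_contra hxy
    obtain ⟨y1, z1, h11, h12, h13⟩ := hx
    obtain ⟨y2, z2, h21, h22, h23⟩ := hy
    set s : Quot (BallEquiv T φ n) → Quot (BallEquiv T φ (n + 1)) :=
      Function.surjInv hπsurj with hsdef
    have hs : ∀ a, π (s a) = a := fun a => Function.surjInv_eq hπsurj a
    have hsinj : Function.Injective s := Function.injective_surjInv hπsurj
    have pick : ∀ (w y z : V), BallEquiv T φ n w y → BallEquiv T φ n w z →
        ¬ BallEquiv T φ (n + 1) y z →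
        ∃ b, b ∉ Set.range s ∧ π b = Quot.mk (BallEquiv T φ n) w := by
      intro w y z hwy hwz hyz
      have hπy : π (Quot.mk _ y) = Quot.mk (BallEquiv T φ n) w := by
        rw [hπ]
        exact Quot.sound (ballEquiv_symm hwy)
      have hπz : π (Quot.mk _ z) = Quot.mk (BallEquiv T φ n) w := by
        rw [hπ]
        exact Quot.sound (ballEquiv_symm hwz)
      by_cases h1 : Quot.mk (BallEquiv T φ (n + 1)) y ∈ Set.range s
      · refine ⟨Quot.mk _ z, ?_, hπz⟩
        rintro ⟨a2, ha2⟩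
        obtain ⟨a1, ha1⟩ := h1
        have e1 : a1 = Quot.mk (BallEquiv T φ n) w := by rw [← hs a1, ha1, hπy]
        have e2 : a2 = Quot.mk (BallEquiv T φ n) w := by rw [← hs a2, ha2, hπz]
        have : Quot.mk (BallEquiv T φ (n + 1)) y = Quot.mk (BallEquiv T φ (n + 1)) z := by
          rw [← ha1, ← ha2, e1, e2]
        exact hyz (quot_mk_ballEquiv_eq.mp this)
      · exact ⟨Quot.mk _ y, h1, hπy⟩
    obtain ⟨b1, hb1r, hb1π⟩ := pick x y1 z1 h11 h12 h13
    obtain ⟨b2, hb2r, hb2π⟩ := pick y y2 z2 h21 h22 h23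
    have hb12 : b1 ≠ b2 := by
      intro h
      apply hxy
      have : Quot.mk (BallEquiv T φ n) x = Quot.mk (BallEquiv T φ n) y := by
        rw [← hb1π, h, hb2π]
      exact quot_mk_ballEquiv_eq.mp this
    let g : Quot (BallEquiv T φ n) ⊕ Bool → Quot (BallEquiv T φ (n + 1)) :=
      fun ab => Sum.elim s (fun b => if b then b1 else b2) ab
    have hginj : Function.Injective g := by
      rintro (a | b) (a' | b') hg
      · exact congrArg Sum.inl (hsinj hg)
      · exfalso
        cases b' <;> simp only [g, Sum.elim_inl, Sum.elim_inr, if_true, if_false] at hg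
        · exact hb2r ⟨a, hg⟩
        · exact hb1r ⟨a, hg⟩
      · exfalso
        cases b <;> simp only [g, Sum.elim_inl, Sum.elim_inr, if_true, if_false] at hg
        · exact hb2r ⟨a', hg.symm⟩
        · exact hb1r ⟨a', hg.symm⟩
      · cases b <;> cases b' <;>
          simp only [g, Sum.elim_inr, if_true, if_false] at hg ⊢
        · exact absurd hg.symm hb12
        · exact absurd hg hb12
    have hle := Nat.card_le_card_of_injective g hginj
    rw [Nat.card_sum, hcard_n, hcard_m] at hle
    have : Nat.card Bool = 2 := by simp [Nat.card_eq_fintype_card]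
    omega
end

section
/- Suppose φ is Sturmian and eventually periodic. Then every class of vertices is finite: for each vertex x, the set {y ∈ V(T) : y is in the same class as x} is finite. -/
open SimpleGraph

/-!
Outside a finite set `K`, each component of `T - K` is colored by a periodic coloring. A vertex
at distance more than `n` from `K` therefore has its `n`-ball determined by its component
(finitely many, by local finiteness) and its orbit under that component's symmetry group
(finitely many orbits), so only a bounded number `N` of classes of `n`-balls have a center far
from `K`. A Sturmian coloring has `N + 2` classes of `N`-balls, so some class has all its centers
within distance `N` of `K`, hence only finitely many centers. A color-preserving automorphism
permutes these centers and preserves distances, which leaves only finitely many images of `x`.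
-/

namespace SimpleGraph

variable {V W : Type*} {G : SimpleGraph V} {H : SimpleGraph W}

lemma Reachable.dist_map_le (f : G →g H) {u v : V} (h : G.Reachable u v) :
    H.dist (f u) (f v) ≤ G.dist u v := by
  obtain ⟨p, hp⟩ := h.exists_walk_length_eq_dist
  simpa [hp] using dist_le (p.map f)

lemma Iso.dist_eq (e : G ≃g H) (u v : V) : H.dist (e u) (e v) = G.dist u v := by
  by_cases h : G.Reachable u v
  · refine le_antisymm (h.dist_map_le e.toHom) ?_
    simpa using (Iso.reachable_iff.mpr h : H.Reachable (e u) (e v)).dist_map_le e.symm.toHom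
  · rw [dist_eq_zero_of_not_reachable h, dist_eq_zero_of_not_reachable (mt Iso.reachable_iff.mp h)]

lemma Connected.finite_setOf_dist_le (hG : G.Connected) [G.LocallyFinite] (n : ℕ) (u : V) :
    {v | G.dist u v ≤ n}.Finite := by
  induction n generalizing u with
  | zero =>
    refine (Set.finite_singleton u).subset fun v hv => ?_
    exact ((hG.dist_eq_zero_iff).mp (Nat.le_zero.mp hv)).symm
  | succ n ih =>
    refine ((G.neighborSet u).toFinite.biUnion fun w _ => ih w).insert u |>.subset fun v hv => ?_
    obtain ⟨p, hp⟩ := (hG u v).exists_walk_length_eq_dist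
    cases p with
    | nil => exact Set.mem_insert _ _
    | cons hadj q =>
      refine Set.mem_insert_of_mem _ (Set.mem_biUnion hadj ?_)
      have := dist_le q
      simp only [Walk.length_cons] at hp
      simp only [Set.mem_ofPred_eq] at hv ⊢
      omega

lemma Walk.mem_componentComplMk {K : Set V} {v w : V} (p : G.Walk v w)
    (hp : ∀ z ∈ p.support, z ∉ K) :
    w ∈ G.componentComplMk (hp v p.start_mem_support) :=
  ⟨hp w p.end_mem_support, ConnectedComponent.sound (p.induce Kᶜ hp).reachable.symm⟩

lemma Connected.mem_componentComplMk_of_dist_le (hG : G.Connected) {K : Set V} {n : ℕ} {v w : V}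
    (hv : ∀ u ∈ K, n < G.dist u v) (hvK : v ∉ K) (hw : G.dist v w ≤ n) :
    w ∈ G.componentComplMk hvK := by
  classical
  obtain ⟨p, hp⟩ := (hG v w).exists_walk_length_eq_dist
  have hsupp : ∀ z ∈ p.support, z ∉ K := fun z hz hzK => by
    have := (dist_le (p.takeUntil z hz)).trans (p.length_takeUntil_le_length hz)
    have := hv z hzK
    rw [dist_comm] at this
    omega
  exact p.mem_componentComplMk hsupp

end SimpleGraph

section Coloring

universe u

variable {V : Type u} {A : Type*} {T : SimpleGraph V} {φ : V → A}

lemma ballEquiv_apply_of_forall_dist_le (g : T ≃g T) {n : ℕ} {v : V}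
    (hg : ∀ u, T.dist v u ≤ n → φ (g u) = φ u) : BallEquiv T φ n v (g v) :=
  ⟨g.toEquiv.subtypeEquiv fun u => by rw [← g.dist_eq v u]; rfl, rfl,
    fun _ _ => g.map_adj_iff.symm, fun u => hg u u.2⟩

lemma Subgroup.equivalence_exists_mem_apply_eq (Γ : Subgroup (Equiv.Perm V)) :
    Equivalence fun x y : V => ∃ γ ∈ Γ, γ x = y where
  refl x := ⟨1, Γ.one_mem, rfl⟩
  symm := by
    rintro x _ ⟨γ, hγ, rfl⟩
    exact ⟨γ⁻¹, Γ.inv_mem hγ, γ.symm_apply_apply x⟩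
  trans := by
    rintro x _ _ ⟨γ, hγ, rfl⟩ ⟨δ, hδ, rfl⟩
    exact ⟨δ * γ, Γ.mul_mem hδ hγ, rfl⟩

lemma IsEventuallyPeriodic.exists_finset_periodic_on_componentCompl
    (hφ : IsEventuallyPeriodic T φ) :
    ∃ K : Finset V, ∀ C : T.ComponentCompl K,
      ∃ ψ : V → A, IsPeriodicColoring T ψ ∧ ∀ u ∈ C, ψ u = φ u := by
  obtain ⟨K, -, hKfin, -, hψ⟩ := hφ
  lift K to Finset V using hKfin
  refine ⟨K, ComponentCompl.ind fun v hv => ?_⟩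
  obtain ⟨ψ, hψper, hψφ⟩ := hψ ⟨v, hv⟩
  exact ⟨ψ, hψper, fun u ⟨huK, hu⟩ => hψφ ⟨u, huK⟩ (ConnectedComponent.exact hu).symm⟩

lemma IsEventuallyPeriodic.exists_finite_code (hT : T.Connected) [T.LocallyFinite]
    (hφ : IsEventuallyPeriodic T φ) :
    ∃ K : Set V, K.Finite ∧ ∃ (ι : Type u) (_ : Finite ι) (c : ↥Kᶜ → ι),
      ∀ (n : ℕ) (v w : ↥Kᶜ), (∀ u ∈ K, n < T.dist u v) → (∀ u ∈ K, n < T.dist u w) → c v = c w →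
        BallEquiv T φ n v w := by
  obtain ⟨K, hK⟩ := hφ.exists_finset_periodic_on_componentCompl
  choose ψ hψ hψφ using hK
  choose Γ hΓadj hΓψ hΓfin using hψ
  have : Fact T.Preconnected := ⟨hT.preconnected⟩
  have := hΓfin
  refine ⟨K, K.finite_toSet, Σ C : T.ComponentCompl K, Quot fun x y : V => ∃ γ ∈ Γ C, γ x = y,
    inferInstance, fun v => ⟨T.componentComplMk v.2, Quot.mk _ v⟩, ?_⟩
  rintro n ⟨v, hvK⟩ ⟨w, hwK⟩ hv hw hvw
  obtain ⟨hC, hq⟩ := Sigma.mk.inj_iff.mp hvw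
  set C := T.componentComplMk hvK
  rw [← hC] at hq
  obtain ⟨γ, hγ, rfl⟩ := (Subgroup.equivalence_exists_mem_apply_eq _).eqvGen_iff.mp
    (Quot.eqvGen_exact (eq_of_heq hq))
  let e : T ≃g T := ⟨γ, hΓadj C γ hγ _ _⟩
  refine ballEquiv_apply_of_forall_dist_le e fun u hu => ?_
  have huC : u ∈ C := hT.mem_componentComplMk_of_dist_le hv hvK hu
  have hγuC : γ u ∈ C :=
    hC ▸ hT.mem_componentComplMk_of_dist_le hw hwK ((e.dist_eq v u).trans_le hu)
  change φ (γ u) = φ u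
  rw [← hψφ C u huC, ← hψφ C _ hγuC, hΓψ C γ hγ u]

lemma exists_ballEquiv_class_near {ι : Type*} [Finite ι] {K : Set V} {n : ℕ} (c : ↥Kᶜ → ι)
    (hc : ∀ v w : ↥Kᶜ, (∀ u ∈ K, n < T.dist u v) → (∀ u ∈ K, n < T.dist u w) → c v = c w →
      BallEquiv T φ n v w)
    (hcard : Nat.card ι < ballComplexity T φ n) :
    ∃ u₀, ∀ u, BallEquiv T φ n u₀ u → ∃ w ∈ K, T.dist w u ≤ n := by
  by_contra! hfar
  choose r hr hrfar using hfar
  have hrK : ∀ x, r x ∉ K := fun x hx => by simpa using hrfar x _ hx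
  let f : Quot (BallEquiv T φ n) → ι := fun q => c ⟨r q.out, hrK _⟩
  have hf : f.Injective := fun q q' h => calc
    q = Quot.mk _ q.out := q.out_eq.symm
    _ = Quot.mk _ (r q.out) := Quot.sound (hr _)
    _ = Quot.mk _ (r q'.out) := Quot.sound (hc _ _ (hrfar _) (hrfar _) h)
    _ = Quot.mk _ q'.out := (Quot.sound (hr _)).symm
    _ = q' := q'.out_eq
  exact hcard.not_ge (Nat.card_le_card_of_injective f hf)

lemma finite_setOf_sameClass (hT : T.Connected) [T.LocallyFinite] {n : ℕ} {u₀ : V}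
    (h : {u | BallEquiv T φ n u₀ u}.Finite) (x : V) : {y | SameClass T φ x y}.Finite := by
  refine (h.biUnion fun w _ => hT.finite_setOf_dist_le (T.dist u₀ x) w).subset ?_
  rintro _ ⟨g, hg, rfl, hgφ⟩
  let e : T ≃g T := ⟨g, hg _ _⟩
  exact Set.mem_biUnion (ballEquiv_apply_of_forall_dist_le e fun u _ => hgφ u) (e.dist_eq u₀ x).le

end Coloring

theorem stmt_15 {V A : Type*} (T : SimpleGraph V) (φ : V → A) (k : ℕ)
    (hk : 2 ≤ k) (htree : T.IsTree) (hreg : ∀ v : V, (T.neighborSet v).ncard = k)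
    (hst : IsSturmian T φ) (hep : IsEventuallyPeriodic T φ) (x : V) :
    {y : V | SameClass T φ x y}.Finite := by
  have hT : T.Connected := htree.connected
  have : T.LocallyFinite := fun v =>
    (Set.finite_of_ncard_pos (by rw [hreg v]; omega)).fintype
  obtain ⟨K, hK, ι, _, c, hc⟩ := hep.exists_finite_code hT
  obtain ⟨u₀, hu₀⟩ := exists_ballEquiv_class_near c (hc (Nat.card ι)) (by rw [hst]; omega)
  have hnear : {u | BallEquiv T φ (Nat.card ι) u₀ u} ⊆ ⋃ w ∈ K, {u | T.dist w u ≤ Nat.card ι} :=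
    fun u hu => by simpa using hu₀ u hu
  exact finite_setOf_sameClass hT
    ((hK.biUnion fun w _ => hT.finite_setOf_dist_le _ w).subset hnear) x
end
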